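/- For the Jackiw–Pi vortex Q(r) = √8 (m+1) r^m/(1+r^{2m+2}) with m ≥ 1 an integer, the self-dual derivative vanishes identically: ∂_r Q(r) − ((m + A_θ[Q](r))/r) Q(r) = 0 for all r > 0, where A_θ[Q](r) = −(1/2)∫₀^r Q(r')² r' dr'. -/

import Mathlib

open MeasureTheory Set

/-- The Jackiw–Pi vortex profile. -/
noncomputable def Q (m : ℕ) (r : ℝ) : ℝ :=
  Real.sqrt 8 * ((m : ℝ) + 1) * r ^ m / (1 + r ^ (2 * m + 2))

/-- The angular connection component of `Q`. -/
noncomputable def Atheta (m : ℕ) (r : ℝ) : ℝ :=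
  -(1/2) * ∫ s in (0:ℝ)..r, (Q m s) ^ 2 * s

/-!
Writing `D(r) = 1 + r^(2m+2)`, the density `Q(s)² s = 8(m+1)² s^(2m+1) / D(s)²` has the explicit
primitive `-4(m+1) / D(s)`, so `Aθ(r) = -2(m+1) r^(2m+2) / D(r)`. On the other hand the logarithmic
derivative of `Q = √8 (m+1) r^m / D` is `m/r - (2m+2) r^(2m+1) / D(r)`, which is exactly `(m + Aθ(r))/r`.
-/

lemma one_add_pow_pos_of_even {n : ℕ} (hn : Even n) (x : ℝ) : 0 < 1 + x ^ n := by
  linarith [hn.pow_nonneg x]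

lemma one_add_pow_two_mul_add_two_pos (m : ℕ) (x : ℝ) : 0 < 1 + x ^ (2 * m + 2) :=
  one_add_pow_pos_of_even ⟨m + 1, by ring⟩ x

lemma hasDerivAt_one_add_pow_two_mul_add_two (m : ℕ) (x : ℝ) :
    HasDerivAt (fun x : ℝ => 1 + x ^ (2 * m + 2)) ((2 * m + 2) * x ^ (2 * m + 1)) x := by
  refine ((hasDerivAt_pow (2 * m + 2) x).const_add 1).congr_deriv ?_
  rw [show 2 * m + 2 - 1 = 2 * m + 1 by omega]
  push_cast
  ring

lemma natCast_mul_pow_sub_one {n : ℕ} {x : ℝ} (hx : x ≠ 0) :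
    n * x ^ (n - 1) = n * x ^ n / x := by
  rcases n with _ | n
  · simp
  · rw [Nat.add_sub_cancel, pow_succ, mul_div_assoc, mul_div_cancel_right₀ _ hx]

lemma continuous_Q (m : ℕ) : Continuous (Q m) :=
  (continuous_const.mul (continuous_pow m)).div (continuous_const.add (continuous_pow _))
    fun s => (one_add_pow_two_mul_add_two_pos m s).ne'

lemma sq_Q_mul (m : ℕ) (s : ℝ) :
    Q m s ^ 2 * s = 8 * ((m : ℝ) + 1) ^ 2 * s ^ (2 * m + 1) / (1 + s ^ (2 * m + 2)) ^ 2 := by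
  rw [Q, div_pow, mul_pow, mul_pow, Real.sq_sqrt (by norm_num), div_mul_eq_mul_div]
  ring

lemma hasDerivAt_primitive_sq_Q_mul (m : ℕ) (s : ℝ) :
    HasDerivAt (fun s : ℝ => -4 * ((m : ℝ) + 1) / (1 + s ^ (2 * m + 2))) (Q m s ^ 2 * s) s := by
  refine ((hasDerivAt_const s (-4 * ((m : ℝ) + 1))).div
    (hasDerivAt_one_add_pow_two_mul_add_two m s)
    (one_add_pow_two_mul_add_two_pos m s).ne').congr_deriv ?_
  rw [sq_Q_mul]
  ring

lemma Atheta_eq (m : ℕ) (r : ℝ) :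
    Atheta m r = -2 * ((m : ℝ) + 1) * r ^ (2 * m + 2) / (1 + r ^ (2 * m + 2)) := by
  rw [Atheta, intervalIntegral.integral_eq_sub_of_hasDerivAt
    (fun s _ => hasDerivAt_primitive_sq_Q_mul m s)
    ((((continuous_Q m).pow 2).mul continuous_id).intervalIntegrable 0 r), zero_pow (by omega)]
  field_simp [(one_add_pow_two_mul_add_two_pos m r).ne']
  ring

lemma hasDerivAt_Q (m : ℕ) {r : ℝ} (hr : r ≠ 0) :
    HasDerivAt (Q m)
      ((m - (2 * m + 2) * r ^ (2 * m + 2) / (1 + r ^ (2 * m + 2))) / r * Q m r) r := by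
  have hnum := (hasDerivAt_pow m r).const_mul (Real.sqrt 8 * ((m : ℝ) + 1))
  refine (hnum.div (hasDerivAt_one_add_pow_two_mul_add_two m r)
    (one_add_pow_two_mul_add_two_pos m r).ne').congr_deriv ?_
  rw [natCast_mul_pow_sub_one hr, Q]
  field_simp [(one_add_pow_two_mul_add_two_pos m r).ne']
  ring

theorem vortex_selfdual_general (m : ℕ) (r : ℝ) (hr : 0 < r) :
    deriv (Q m) r - (((m : ℝ) + Atheta m r) / r) * Q m r = 0 := by
  rw [(hasDerivAt_Q m hr.ne').deriv, Atheta_eq]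
  ring

theorem vortex_selfdual (m : ℕ) (hm : 1 ≤ m) (r : ℝ) (hr : 0 < r) :
    deriv (Q m) r - (((m : ℝ) + Atheta m r) / r) * Q m r = 0 :=
  vortex_selfdual_general m r hr
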